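/- Let H be the Thue–Morse substitution and let x ∈ {0,1}^ℕ begin with the word 111 (so that x ∉ K and δ(x) = 2). Then for every integer n ≥ 1: δ(σ^k(H^n(x))) = 2^{n+1} − k for all 0 ≤ k < 2^{n−1}, and δ(σ^{2^{n−1}+l}(H^n(x))) = 2^{n+1} − l for all 0 ≤ l ≤ 2^{n−1} − 1. In particular H^n(x) has an accident at time 2^{n−1}. -/

import Mathlib

open Filter Topology MeasureTheory

variable {A : Type*}

/-- The shift map on infinite words. -/
def shift (x : ℕ → A) : ℕ → A := fun n => x (n + 1)

/-- Image of a finite word under a substitution. -/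
def wordMap (H : A → List A) (w : List A) : List A := w.flatMap H

/-- Image of an infinite word under a substitution (each `H a` nonempty makes this the
infinite concatenation `H(x₀)H(x₁)⋯`). -/
def substSeq (H : A → List A) (x : ℕ → A) : ℕ → A :=
  fun n => (wordMap H ((List.range (n + 1)).map x)).getD n (x 0)

/-- The prefix of length `n` of an infinite word. -/
def prefixWord (x : ℕ → A) (n : ℕ) : List A := (List.range n).map x

/-- The factor of length `n` at position `i` of an infinite word. -/
def factorAt (x : ℕ → A) (i n : ℕ) : List A := (List.range n).map fun j => x (i + j)

/-- The language of an infinite word: the set of its finite factors. -/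
def Lang (u : ℕ → A) : Set (List A) := {w | ∃ i, w = factorAt u i w.length}

/-- A sequence is (purely) periodic for the shift. -/
def PeriodicSeq (x : ℕ → A) : Prop := ∃ m, 0 < m ∧ ∀ n, x (n + m) = x n

/-- `u` is a fixed point of the substitution `H`. -/
def IsFixedPointSubst (H : A → List A) (u : ℕ → A) : Prop := substSeq H u = u

/-- `H` is primitive: some power of `H` maps every letter onto a word containing
every letter. -/
def PrimitiveSubst (H : A → List A) : Prop :=
  ∃ k, 0 < k ∧ ∀ a b : A, b ∈ (wordMap H)^[k] [a]

/-- `H` is aperiodic: no fixed point of `H` is periodic for the shift. -/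
def AperiodicSubst (H : A → List A) : Prop :=
  ∀ u : ℕ → A, IsFixedPointSubst H u → ¬ PeriodicSeq u

/-- `H` is marked: first letters of images are pairwise distinct, and so are last letters. -/
def MarkedSubst (H : A → List A) (hne : ∀ a, H a ≠ []) : Prop :=
  Function.Injective (fun a => (H a).head (hne a)) ∧
  Function.Injective (fun a => (H a).getLast (hne a))

/-- `H` is 2-full (with respect to the fixed point `u`): every word of length 2 belongs
to the language. -/
def TwoFull (H : A → List A) (u : ℕ → A) : Prop :=
  ∀ w : List A, w.length = 2 → w ∈ Lang u

/-- The attractor `K`: closure of the shift-orbit of the fixed point `u`. -/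
def orbitClosure [TopologicalSpace A] (u : ℕ → A) : Set (ℕ → A) :=
  closure {y | ∃ n, y = shift^[n] u}

/-- `δ(x)`: the length of the maximal prefix of `x` belonging to the language of `u`. -/
noncomputable def delta (u x : ℕ → A) : ℕ := sSup {n | prefixWord x n ∈ Lang u}

/-- The renormalization operator `R`. -/
noncomputable def renorm (H : A → List A) (V : (ℕ → A) → ℝ) : (ℕ → A) → ℝ :=
  fun x => ∑ i ∈ Finset.range (H (x 0)).length, V (shift^[i] (substSeq H x))

/-- `t_n(x) = |H^n(x₀)|`. -/
def tlen (H : A → List A) (n : ℕ) (x : ℕ → A) : ℕ := ((wordMap H)^[n] [x 0]).length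

/-- An accident occurs at time `b`. -/
def AccidentAt (u x : ℕ → A) (b : ℕ) : Prop :=
  0 < b ∧ delta u x - b < delta u (shift^[b] x) ∧
    ∀ i < b, delta u (shift^[i] x) = delta u x - i

/-- The first accident time of `x` (junk value `0` if there is none). -/
noncomputable def firstAccident (u x : ℕ → A) : ℕ := sInf {b | AccidentAt u x b}

/-- The `j`-th accident time `B_j` of `x`, defined inductively. -/
noncomputable def accidentTime (u x : ℕ → A) : ℕ → ℕ
  | 0 => 0
  | j + 1 => accidentTime u x j + firstAccident u (shift^[accidentTime u x j] x)

/-- The set of (genuine) accident times of `x`. -/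
def AccidentSet (u x : ℕ → A) : Set ℕ :=
  {B | ∃ j : ℕ, B = accidentTime u x (j + 1) ∧
        AccidentAt u (shift^[accidentTime u x j] x)
          (firstAccident u (shift^[accidentTime u x j] x))}

/-- A word is right special. -/
def RightSpecial (u : ℕ → A) (w : List A) : Prop :=
  ∃ b c : A, b ≠ c ∧ w ++ [b] ∈ Lang u ∧ w ++ [c] ∈ Lang u

/-- A word is left special. -/
def LeftSpecial (u : ℕ → A) (w : List A) : Prop :=
  ∃ a b : A, a ≠ b ∧ a :: w ∈ Lang u ∧ b :: w ∈ Lang u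

/-- A word is bispecial. -/
def Bispecial (u : ℕ → A) (w : List A) : Prop := RightSpecial u w ∧ LeftSpecial u w

/-- `l` is a recognizability constant for `H`: every long enough word of the language
admits a unique desubstitution. -/
def RecogBound (H : A → List A) (u : ℕ → A) (l : ℕ) : Prop :=
  ∀ z ∈ Lang u, l < z.length →
    ∃! d : List A × List A × List A,
      ∃ s p : A,
        z = d.1 ++ wordMap H d.2.1 ++ d.2.2 ∧
        d.2.1 ∈ Lang u ∧
        d.1 <:+ H s ∧ d.1.length < (H s).length ∧
        d.2.2 <+: H p ∧ d.2.2.length < (H p).length ∧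
        ([s] ++ d.2.1 ++ [p]) ∈ Lang u

/-- The incidence matrix of a substitution, with real entries. -/
def incMat [Fintype A] [DecidableEq A] (H : A → List A) : Matrix A A ℝ :=
  fun a b => ((H a).count b : ℝ)

/-- `lam` is the Perron–Frobenius eigenvalue of the incidence matrix of the (primitive)
substitution `H`: it admits an entrywise positive eigenvector. -/
def IsPerronValue [Fintype A] [DecidableEq A] (H : A → List A) (lam : ℝ) : Prop :=
  ∃ v : A → ℝ, (∀ a, 0 < v a) ∧ (incMat H).mulVec v = lam • v

/-- Concatenation of a finite word with an infinite word. -/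
def catWord (S : List A) (y : ℕ → A) : ℕ → A :=
  fun n => S.getD n (y (n - S.length))

/-- The Thue–Morse substitution on the alphabet `Bool` (`false = 0`, `true = 1`):
`0 ↦ 01`, `1 ↦ 10`. -/
def tm : Bool → List Bool := fun a => if a then [true, false] else [false, true]

/-!
The word `Hⁿ(x)` begins with `Hⁿ⁻¹(101010)`. Its factors `Hⁿ⁻¹(1010) = Hⁿ(11)` and
`Hⁿ⁻¹(0101) = Hⁿ(00)` lie in the language, which gives the lower bounds on `δ`. They are sharp
because one more letter turns these factors, shifted by `k < 2ⁿ⁻¹`, into suffixes of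
`Hⁿ⁻¹(a ā a ā) a`, which are not in the language: the image of a word of length at least two
only occurs at even positions of the fixed point (an odd occurrence would force a cube), so such
a suffix can be desubstituted, halving the shift each time, down to the overlap `a ā a ā a`.
-/

def OccursAt (u : ℕ → A) (w : List A) (i : ℕ) : Prop := w = factorAt u i w.length

theorem factorAt_succ (u : ℕ → A) (i n : ℕ) :
    factorAt u i (n + 1) = u i :: factorAt u (i + 1) n := by
  simp [factorAt, List.range_succ_eq_map, Nat.add_assoc, Nat.add_comm 1]

@[simp]
theorem occursAt_nil (u : ℕ → A) (i : ℕ) : OccursAt u [] i := rfl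

@[simp]
theorem occursAt_cons {u : ℕ → A} {a : A} {w : List A} {i : ℕ} :
    OccursAt u (a :: w) i ↔ u i = a ∧ OccursAt u w (i + 1) := by
  simp [OccursAt, factorAt_succ, eq_comm]

theorem occursAt_append {u : ℕ → A} {v w : List A} {i : ℕ} :
    OccursAt u (v ++ w) i ↔ OccursAt u v i ∧ OccursAt u w (i + v.length) := by
  induction v generalizing i with
  | nil => simp
  | cons a v ih => simp [ih, and_assoc, Nat.add_assoc, Nat.add_comm 1]

theorem mem_lang_of_infix {u : ℕ → A} {v w : List A} (hv : v ∈ Lang u) (h : w <:+: v) :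
    w ∈ Lang u := by
  obtain ⟨s, t, rfl⟩ := h
  obtain ⟨i, hi⟩ := hv
  exact ⟨i + s.length, (occursAt_append.1 (occursAt_append.1 hi).1).2⟩

theorem iterate_shift_apply (y : ℕ → A) (p n : ℕ) : shift^[p] y n = y (n + p) := by
  induction p generalizing y with
  | zero => rfl
  | succ p ih => rw [Function.iterate_succ_apply, ih]; rfl

theorem prefixWord_eq_take (y : ℕ → A) {m n : ℕ} (h : m ≤ n) :
    prefixWord y m = (prefixWord y n).take m := by
  simp [prefixWord, ← List.map_take, List.take_range, Nat.min_eq_left h]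

theorem prefixWord_iterate_shift (y : ℕ → A) (p n : ℕ) :
    prefixWord (shift^[p] y) n = (prefixWord y (p + n)).drop p := by
  simp only [prefixWord, List.range_add, List.map_append, List.map_map]
  rw [List.drop_left' (by simp)]
  exact List.map_congr_left fun j _ => by simp [iterate_shift_apply, Nat.add_comm]

theorem prefixWord_of_prefixWord_eq_append {y : ℕ → A} {p q : List A}
    (h : prefixWord y (p.length + q.length) = p ++ q) :
    prefixWord y p.length = p ∧ prefixWord (shift^[p.length] y) q.length = q := by
  rw [prefixWord_eq_take y (Nat.le_add_right _ _), prefixWord_iterate_shift, h]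
  simp

theorem prefixWord_succ (y : ℕ → A) (n : ℕ) :
    prefixWord y (n + 1) = prefixWord y n ++ [y n] := by
  simp [prefixWord, List.range_succ]

theorem delta_eq_of_mem_of_not_mem {u y : ℕ → A} {n : ℕ} (h : prefixWord y n ∈ Lang u)
    (h' : prefixWord y (n + 1) ∉ Lang u) : delta u y = n := by
  have hle : ∀ m ∈ {m | prefixWord y m ∈ Lang u}, m ≤ n := fun m hm => by
    by_contra! hlt
    rw [prefixWord_eq_take y hlt] at h'
    exact h' (mem_lang_of_infix hm (List.take_prefix _ _).isInfix)
  exact le_antisymm (csSup_le ⟨n, h⟩ hle) (le_csSup ⟨n, hle⟩ h)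

theorem not_mem_orbitClosure_of_prefixWord_not_mem [TopologicalSpace A] [DiscreteTopology A]
    {u x : ℕ → A} {n : ℕ} (hx : prefixWord x n ∉ Lang u) : x ∉ orbitClosure u := by
  have hfn : ∀ y : ℕ → A, prefixWord y n = List.ofFn fun i : Fin n => y i := fun y => by
    simp [prefixWord, List.ofFn_eq_map, ← List.map_coe_finRange_eq_range]
  have hclosed : IsClosed {y : ℕ → A | prefixWord y n ∈ Lang u} := by
    simp only [hfn]
    exact (isClosed_discrete {v : Fin n → A | List.ofFn v ∈ Lang u}).preimage (by fun_prop)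
  refine fun hmem => hx (closure_minimal ?_ hclosed hmem)
  rintro _ ⟨k, rfl⟩
  refine ⟨k, ?_⟩
  simp [prefixWord, factorAt, iterate_shift_apply, Nat.add_comm]

theorem wordMap_append (H : A → List A) (v w : List A) :
    wordMap H (v ++ w) = wordMap H v ++ wordMap H w :=
  List.flatMap_append

theorem iterate_wordMap_append (H : A → List A) (m : ℕ) (v w : List A) :
    (wordMap H)^[m] (v ++ w) = (wordMap H)^[m] v ++ (wordMap H)^[m] w := by
  induction m generalizing v w with
  | zero => rfl
  | succ m ih => simp only [Function.iterate_succ_apply, wordMap_append, ih]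

namespace ThueMorse

theorem wordMap_cons (a : Bool) (w : List Bool) :
    wordMap tm (a :: w) = a :: (!a) :: wordMap tm w := by
  cases a <;> rfl

theorem length_wordMap (w : List Bool) : (wordMap tm w).length = 2 * w.length := by
  induction w with
  | nil => rfl
  | cons a w ih => simp [wordMap_cons, ih]; ring

theorem length_iterate_wordMap (m : ℕ) (w : List Bool) :
    ((wordMap tm)^[m] w).length = 2 ^ m * w.length := by
  induction m generalizing w with
  | zero => simp
  | succ m ih => rw [Function.iterate_succ_apply, ih, length_wordMap]; ring

theorem exists_iterate_wordMap_cons (m : ℕ) (a : Bool) (w : List Bool) :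
    ∃ r, (wordMap tm)^[m] (a :: w) = a :: r := by
  induction m generalizing w with
  | zero => exact ⟨w, rfl⟩
  | succ m ih => rw [Function.iterate_succ_apply, wordMap_cons]; exact ih _

theorem drop_wordMap (k : ℕ) (w : List Bool) :
    (wordMap tm w).drop (2 * k) = wordMap tm (w.drop k) := by
  induction k generalizing w with
  | zero => rfl
  | succ k ih =>
    cases w with
    | nil => rfl
    | cons a w => rw [wordMap_cons, Nat.mul_succ]; exact ih w

theorem getElem?_wordMap_two_mul (w : List Bool) (q : ℕ) :
    (wordMap tm w)[2 * q]? = w[q]? := by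
  induction w generalizing q with
  | nil => rfl
  | cons a w ih => cases q <;> simp [wordMap_cons, Nat.mul_succ, ih]

theorem getElem?_wordMap_two_mul_add_one (w : List Bool) (q : ℕ) :
    (wordMap tm w)[2 * q + 1]? = w[q]?.map (!·) := by
  induction w generalizing q with
  | nil => rfl
  | cons a w ih => cases q <;> simp [wordMap_cons, Nat.mul_succ, ih]

theorem substSeq_two_mul (y : ℕ → Bool) (j : ℕ) : substSeq tm y (2 * j) = y j := by
  simp [substSeq, List.getD_eq_getElem?_getD, getElem?_wordMap_two_mul,
    List.getElem?_range (show j < 2 * j + 1 by omega)]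

theorem substSeq_two_mul_add_one (y : ℕ → Bool) (j : ℕ) :
    substSeq tm y (2 * j + 1) = !y j := by
  simp [substSeq, List.getD_eq_getElem?_getD, getElem?_wordMap_two_mul_add_one,
    List.getElem?_range (show j < 2 * j + 1 + 1 by omega)]

theorem prefixWord_substSeq (y : ℕ → Bool) (n : ℕ) :
    prefixWord (substSeq tm y) (2 * n) = wordMap tm (prefixWord y n) := by
  induction n with
  | zero => rfl
  | succ n ih =>
    rw [Nat.mul_succ, prefixWord_succ, prefixWord_succ, ih, prefixWord_succ y, wordMap_append,
      substSeq_two_mul, substSeq_two_mul_add_one, wordMap_cons]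
    simp [wordMap]

theorem prefixWord_iterate_substSeq (y : ℕ → Bool) (m n : ℕ) :
    prefixWord ((substSeq tm)^[m] y) (2 ^ m * n) = (wordMap tm)^[m] (prefixWord y n) := by
  induction m generalizing y with
  | zero => simp
  | succ m ih =>
    rw [Function.iterate_succ_apply', Function.iterate_succ_apply', pow_succ', Nat.mul_assoc,
      prefixWord_substSeq, ih]

theorem prefixWord_iterate_substSeq_of_prefixWord_eq_111 {x : ℕ → Bool}
    (hx : prefixWord x 3 = [true, true, true]) (m : ℕ) :
    prefixWord ((substSeq tm)^[m + 1] x) (2 ^ m * 5) =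
        (wordMap tm)^[m] [true, false, true, false, true] ∧
      prefixWord (shift^[2 ^ m] ((substSeq tm)^[m + 1] x)) (2 ^ m * 5) =
        (wordMap tm)^[m] [false, true, false, true, false] := by
  have hy : prefixWord ((substSeq tm)^[m + 1] x) (2 ^ m * 6) =
      (wordMap tm)^[m] [true, false, true, false, true, false] := by
    rw [show 2 ^ m * 6 = 2 ^ (m + 1) * 3 by ring, prefixWord_iterate_substSeq, hx,
      Function.iterate_succ_apply]
    rfl
  have hlen := length_iterate_wordMap m
  obtain ⟨hy₀, -⟩ := prefixWord_of_prefixWord_eq_append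
    (p := (wordMap tm)^[m] [true, false, true, false, true]) (q := (wordMap tm)^[m] [false])
    (by rw [hlen, hlen, ← Nat.mul_add, ← iterate_wordMap_append]; exact hy)
  obtain ⟨-, hy₁⟩ := prefixWord_of_prefixWord_eq_append
    (p := (wordMap tm)^[m] [true]) (q := (wordMap tm)^[m] [false, true, false, true, false])
    (by rw [hlen, hlen, ← Nat.mul_add, ← iterate_wordMap_append]; exact hy)
  simp only [hlen] at hy₀ hy₁
  exact ⟨hy₀, by simpa using hy₁⟩

section FixedPoint

variable {u : ℕ → Bool} (hu : IsFixedPointSubst tm u)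
include hu

theorem fixedPoint_two_mul (j : ℕ) : u (2 * j) = u j := by
  conv_lhs => rw [← hu]
  exact substSeq_two_mul u j

theorem fixedPoint_two_mul_add_one (j : ℕ) : u (2 * j + 1) = !u j := by
  conv_lhs => rw [← hu]
  exact substSeq_two_mul_add_one u j

theorem not_cube (j : ℕ) : ¬ (u j = u (j + 1) ∧ u (j + 1) = u (j + 2)) := by
  obtain ⟨i, rfl | rfl⟩ := Nat.even_or_odd' j
  · simp [fixedPoint_two_mul_add_one hu, fixedPoint_two_mul hu]
  · rw [show 2 * i + 1 + 1 = 2 * (i + 1) by ring, show 2 * i + 1 + 2 = 2 * (i + 1) + 1 by ring,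
      fixedPoint_two_mul_add_one hu (i + 1), fixedPoint_two_mul hu (i + 1)]
    simp

theorem cube_not_mem (a : Bool) : [a, a, a] ∉ Lang u := by
  rintro ⟨i, hi : OccursAt u _ i⟩
  simp only [occursAt_cons, occursAt_nil, and_true] at hi
  exact not_cube hu i ⟨hi.1.trans hi.2.1.symm, hi.2.1.trans hi.2.2.symm⟩

theorem occursAt_wordMap_iff {w : List Bool} {i : ℕ} :
    OccursAt u (wordMap tm w) (2 * i) ↔ OccursAt u w i := by
  induction w generalizing i with
  | nil => simp [wordMap]
  | cons a w ih =>
    rw [wordMap_cons, occursAt_cons, occursAt_cons, occursAt_cons, fixedPoint_two_mul hu,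
      fixedPoint_two_mul_add_one hu, show 2 * i + 1 + 1 = 2 * (i + 1) by ring, ih]
    simp

theorem mem_lang_wordMap {w : List Bool} (hw : w ∈ Lang u) : wordMap tm w ∈ Lang u :=
  let ⟨i, hi⟩ := hw
  ⟨2 * i, (occursAt_wordMap_iff hu).2 hi⟩

theorem mem_lang_iterate_wordMap {w : List Bool} (hw : w ∈ Lang u) (m : ℕ) :
    (wordMap tm)^[m] w ∈ Lang u := by
  induction m with
  | zero => exact hw
  | succ m ih => rw [Function.iterate_succ_apply']; exact mem_lang_wordMap hu ih

theorem occursAt_wordMap_append_singleton_iff {w : List Bool} {c : Bool} {i : ℕ} :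
    OccursAt u (wordMap tm w ++ [c]) (2 * i) ↔ OccursAt u (w ++ [c]) i := by
  simp only [occursAt_append, occursAt_wordMap_iff hu, length_wordMap, ← Nat.mul_add,
    occursAt_cons, occursAt_nil, fixedPoint_two_mul hu]

theorem even_of_occursAt_wordMap {w : List Bool} (hw : 2 ≤ w.length) {i : ℕ}
    (h : OccursAt u (wordMap tm w) i) : ∃ j, i = 2 * j := by
  obtain ⟨j, rfl | rfl⟩ := Nat.even_or_odd' i
  · exact ⟨j, rfl⟩
  obtain ⟨a, b, w, rfl⟩ : ∃ a b w', w = a :: b :: w' := by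
    match w, hw with
    | a :: b :: w', _ => exact ⟨a, b, w', rfl⟩
  simp only [wordMap_cons, occursAt_cons, show 2 * j + 1 + 1 = 2 * (j + 1) by ring,
    show 2 * (j + 1) + 1 + 1 = 2 * (j + 2) by ring, fixedPoint_two_mul hu,
    fixedPoint_two_mul_add_one hu] at h
  obtain ⟨rfl, h₁, rfl, h₂, -⟩ := h
  simp only [Bool.not_not] at h₁ h₂
  exact (not_cube hu j ⟨h₁.symm, h₂.symm⟩).elim

theorem overlap_not_mem (a : Bool) : [a, !a, a, !a, a] ∉ Lang u := by
  rintro ⟨i, hi : OccursAt u _ i⟩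
  have hw : [a, !a, a, !a, a] = wordMap tm [a, a] ++ [a] := by cases a <;> rfl
  rw [hw] at hi
  obtain ⟨j, rfl⟩ := even_of_occursAt_wordMap hu le_rfl (occursAt_append.1 hi).1
  exact cube_not_mem hu a ⟨j, (occursAt_wordMap_append_singleton_iff hu).1 hi⟩

theorem pair_mem (a : Bool) : [a, a] ∈ Lang u := by
  have h1 : u 1 = !u 0 := fixedPoint_two_mul_add_one hu 0
  have h2 : u 2 = u 1 := fixedPoint_two_mul hu 1
  have h3 : u 3 = !u 1 := fixedPoint_two_mul_add_one hu 1
  have h5 : u 5 = !u 2 := fixedPoint_two_mul_add_one hu 2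
  have h6 : u 6 = u 3 := fixedPoint_two_mul hu 3
  have hA : OccursAt u [!u 0, !u 0] 1 := by simp [h1, h2]
  have hB : OccursAt u [u 0, u 0] 5 := by simp [h1, h2, h3, h5, h6]
  cases a <;> cases h : u 0 <;> simp only [h, Bool.not_true, Bool.not_false] at hA hB
  exacts [⟨5, hB⟩, ⟨1, hA⟩, ⟨1, hA⟩, ⟨5, hB⟩]

theorem drop_one_wordMap_append_not_mem {w : List Bool} {c : Bool} (hw : 3 ≤ w.length)
    (h : w ++ [c] ∉ Lang u) : (wordMap tm w ++ [c]).drop 1 ∉ Lang u := by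
  obtain ⟨a, w, rfl⟩ := List.exists_cons_of_length_pos (by omega : 0 < w.length)
  rintro ⟨i, hi : OccursAt u _ i⟩
  rw [wordMap_cons] at hi
  simp only [List.cons_append, List.drop_succ_cons, List.drop_zero, occursAt_cons] at hi
  obtain ⟨j, hj⟩ := even_of_occursAt_wordMap hu (by simp at hw; omega) (occursAt_append.1 hi.2).1
  obtain ⟨j, rfl⟩ := Nat.exists_eq_add_one_of_ne_zero (by omega : j ≠ 0)
  obtain rfl : i = 2 * j + 1 := by omega
  refine h ⟨j, occursAt_cons.2 ⟨?_, ?_⟩⟩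
  · simpa [fixedPoint_two_mul_add_one hu] using hi.1
  · exact (occursAt_wordMap_append_singleton_iff hu).1 (hj ▸ hi.2)

theorem drop_iterate_wordMap_append_not_mem {w : List Bool} {c : Bool} (hw : 3 ≤ w.length)
    (h : w ++ [c] ∉ Lang u) (m : ℕ) {k : ℕ} (hk : k < 2 ^ m) :
    ((wordMap tm)^[m] w ++ [c]).drop k ∉ Lang u := by
  induction m generalizing k with
  | zero => simpa [show k = 0 by omega] using h
  | succ m ih =>
    have hv : 3 * 2 ^ m ≤ ((wordMap tm)^[m] w).length := by
      rw [length_iterate_wordMap, Nat.mul_comm 3]; exact Nat.mul_le_mul_left _ hw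
    rw [Function.iterate_succ_apply']
    generalize (wordMap tm)^[m] w = v at ih hv
    obtain ⟨k, rfl | rfl⟩ := Nat.even_or_odd' k <;> have hk : k < 2 ^ m := by omega
    all_goals
      have hdrop : (wordMap tm v ++ [c]).drop (2 * k) = wordMap tm (v.drop k) ++ [c] := by
        rw [List.drop_append_of_le_length (by rw [length_wordMap]; omega), drop_wordMap]
      have hstep := drop_one_wordMap_append_not_mem hu (w := v.drop k) (by simp; omega)
        (by rw [← List.drop_append_of_le_length (by omega)]; exact ih hk)
    · rw [hdrop]
      exact fun hmem => hstep (mem_lang_of_infix hmem (List.drop_suffix _ _).isInfix)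
    · rwa [← List.drop_drop, hdrop]

theorem delta_iterate_shift {y : ℕ → Bool} {m : ℕ} {a : Bool}
    (hy : prefixWord y (2 ^ m * 5) = (wordMap tm)^[m] [a, !a, a, !a, a]) {k : ℕ}
    (hk : k < 2 ^ m) : delta u (shift^[k] y) = 2 ^ (m + 2) - k := by
  set P := (wordMap tm)^[m] [a, !a, a, !a]
  have hP : P.length = 2 ^ (m + 2) := by simp [P, length_iterate_wordMap, pow_add]
  have h4 : 2 ^ (m + 2) = 2 ^ m * 4 := by ring
  obtain ⟨r, hr⟩ := exists_iterate_wordMap_cons m a []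
  have hpre : ∀ N ≤ 2 ^ m * 5 - k,
      prefixWord (shift^[k] y) N = ((P ++ a :: r).take (k + N)).drop k := fun N hN => by
    rw [prefixWord_iterate_shift, prefixWord_eq_take y (by omega : k + N ≤ 2 ^ m * 5), hy, ← hr,
      ← iterate_wordMap_append]
    rfl
  apply delta_eq_of_mem_of_not_mem
  · rw [hpre _ (by omega), Nat.add_sub_cancel' (by omega), ← hP, List.take_left' rfl]
    have hP' : P = (wordMap tm)^[m + 1] [a, a] := by
      rw [Function.iterate_succ_apply]; cases a <;> rfl
    exact mem_lang_of_infix (hP' ▸ mem_lang_iterate_wordMap hu (pair_mem hu a) _)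
      (List.drop_suffix _ _).isInfix
  · rw [hpre _ (by omega), ← Nat.add_assoc, Nat.add_sub_cancel' (by omega),
      ← hP, List.take_length_add_append]
    exact drop_iterate_wordMap_append_not_mem hu (by simp) (overlap_not_mem hu a) m hk

end FixedPoint

end ThueMorse

/-- For Thue–Morse and `x` beginning with `111` (so `x ∉ K` and
`δ(x) = 2`), for every `n ≥ 1`: `δ(σᵏ(Hⁿ(x))) = 2^{n+1} - k` for `0 ≤ k < 2^{n-1}`,
`δ(σ^{2^{n-1}+l}(Hⁿ(x))) = 2^{n+1} - l` for `0 ≤ l ≤ 2^{n-1} - 1`; in particular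
`Hⁿ(x)` has an accident at time `2^{n-1}`. -/
theorem thue_morse_delta_near_111
    (u : ℕ → Bool) (hu : IsFixedPointSubst tm u)
    (x : ℕ → Bool) (hx3 : prefixWord x 3 = [true, true, true]) :
    x ∉ orbitClosure u ∧ delta u x = 2 ∧
      ∀ n : ℕ, 1 ≤ n →
        (∀ k < 2 ^ (n - 1),
          delta u (shift^[k] ((substSeq tm)^[n] x)) = 2 ^ (n + 1) - k) ∧
        (∀ l ≤ 2 ^ (n - 1) - 1,
          delta u (shift^[2 ^ (n - 1) + l] ((substSeq tm)^[n] x)) = 2 ^ (n + 1) - l) ∧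
        AccidentAt u ((substSeq tm)^[n] x) (2 ^ (n - 1)) := by
  have hx2 : prefixWord x 2 = [true, true] := by
    rw [prefixWord_eq_take x (by norm_num : 2 ≤ 3), hx3]; rfl
  have hcube := ThueMorse.cube_not_mem hu true
  refine ⟨not_mem_orbitClosure_of_prefixWord_not_mem (hx3 ▸ hcube),
    delta_eq_of_mem_of_not_mem (hx2 ▸ ThueMorse.pair_mem hu true) (hx3 ▸ hcube), ?_⟩
  rintro (_ | m) hm
  · omega
  simp only [Nat.add_sub_cancel]
  obtain ⟨hy₀, hy₁⟩ := ThueMorse.prefixWord_iterate_substSeq_of_prefixWord_eq_111 hx3 m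
  set y := (substSeq tm)^[m + 1] x
  have hk (k) (hk : k < 2 ^ m) := ThueMorse.delta_iterate_shift hu hy₀ hk
  have hl (l) (hl : l < 2 ^ m) : delta u (shift^[2 ^ m + l] y) = 2 ^ (m + 2) - l := by
    rw [Nat.add_comm, Function.iterate_add_apply]
    exact ThueMorse.delta_iterate_shift hu hy₁ hl
  have hp : 0 < 2 ^ m := by positivity
  have hδ : delta u y = 2 ^ (m + 2) := hk 0 hp
  have hδ' : delta u (shift^[2 ^ m] y) = 2 ^ (m + 2) := hl 0 hp
  have h4 : 2 ^ (m + 2) = 2 ^ m * 4 := by ring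
  refine ⟨hk, fun l hl' => hl l (by omega), hp, by omega, fun i hi => by rw [hk i hi, hδ]⟩
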